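/- Let n ≥ 3 and let 1 ≤ j ≤ n − 1. Set α_j = Σ_{i=1}^{n}(𝐞_{u_i^{(1)}} + 𝐞_{u_i^{(2)}}) + 2j·𝐞_w ∈ ℤ^{V(𝒢_n)}. Suppose α_j = α′ + β where α′ ∈ ℤ^{V(𝒢_n)} lies in the relative interior of the cone ℚ_{≥0}A_{𝒢_n} (i.e., α′ satisfies strictly all the defining inequalities: coordinates at each u_i^{(1)}, u_i^{(2)} positive; Σ_i(c_{1,i}+c_{2,i}) > c′; and for every U ⊆ {1,…,n}, Σ_{i∈U}c_{1,i} + Σ_{i∉U}c_{2,i} + c′ > Σ_{i∉U}c_{1,i} + Σ_{i∈U}c_{2,i}) and β ∈ ℤ^{V(𝒢_n)} lies in ℚ_{≥0}A_{𝒢_n} (satisfies the same inequalities non-strictly). Then β = 0. In particular, the n − 1 distinct vectors α_1, …, α_{n−1} must all occur in any minimal system of generators of the interior ideal, so the Cohen–Macaulay type of k[𝒢_n] is at least n − 1. -/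

import Mathlib

/-- Vertices of the graph `𝒢ₙ`: `none = w`, `some (i,0) = uᵢ⁽¹⁾`, `some (i,1) = uᵢ⁽²⁾`. -/
abbrev VertexVar (n : ℕ) := Option (Fin n × Fin 2)

/-- The vector `α_j = Σᵢ (𝐞_{uᵢ⁽¹⁾} + 𝐞_{uᵢ⁽²⁾}) + 2j·𝐞_w ∈ ℤ^{V(𝒢ₙ)}`. -/
def alphaVec (n j : ℕ) : VertexVar n → ℤ :=
  fun v => match v with
  | none => 2 * j
  | some _ => 1

/-- If `α_j = α′ + β` where the integer vector `α′` satisfies all the defining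
inequalities of the cone `ℚ_{≥0}A_{𝒢ₙ}` strictly (i.e. lies in its relative interior)
and the integer vector `β` satisfies them non-strictly (i.e. lies in the cone),
then `β = 0`.  In particular `α₁, …, α_{n−1}` occur in every minimal generating
system of the interior ideal, so the Cohen–Macaulay type of `k[𝒢ₙ]` is `≥ n − 1`. -/
theorem stmt_15 (n : ℕ) (hn : 3 ≤ n) (j : ℕ) (hj1 : 1 ≤ j) (hj2 : j ≤ n - 1)
    (α' β : VertexVar n → ℤ)
    (hsum : alphaVec n j = α' + β)
    -- α′ lies in the relative interior of the cone:
    (hα1 : ∀ p : Fin n × Fin 2, 0 < α' (some p))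
    (hα2 : α' none < ∑ i : Fin n, (α' (some (i, 0)) + α' (some (i, 1))))
    (hα3 : ∀ U : Finset (Fin n),
      (∑ i ∈ Uᶜ, α' (some (i, 0))) + (∑ i ∈ U, α' (some (i, 1))) <
        (∑ i ∈ U, α' (some (i, 0))) + (∑ i ∈ Uᶜ, α' (some (i, 1))) + α' none)
    -- β lies in the cone:
    (hβ1 : ∀ p : Fin n × Fin 2, 0 ≤ β (some p))
    (hβ2 : β none ≤ ∑ i : Fin n, (β (some (i, 0)) + β (some (i, 1))))
    (hβ3 : ∀ U : Finset (Fin n),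
      (∑ i ∈ Uᶜ, β (some (i, 0))) + (∑ i ∈ U, β (some (i, 1))) ≤
        (∑ i ∈ U, β (some (i, 0))) + (∑ i ∈ Uᶜ, β (some (i, 1))) + β none) :
    β = 0 := by
  have hb : ∀ p : Fin n × Fin 2, β (some p) = 0 := by
    intro p
    have h1 : α' (some p) + β (some p) = 1 := by
      have := congrFun hsum (some p)
      simpa [alphaVec] using this.symm
    have h2 := hα1 p
    have h3 := hβ1 p
    omega
  have h2 : β none ≤ 0 := by simpa [hb] using hβ2
  have h3 : 0 ≤ β none := by simpa [hb] using hβ3 ∅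
  funext v
  cases v with
  | none => simpa using le_antisymm h2 h3
  | some p => simpa using hb p
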